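/- Let A be a *-ring with cyclic trace ρ such that ρ(q) = 1 for the given rank-1 projection q (so ρ(qm) = ρ_q(m)). For tangent vectors a, b at q (qa+aq=a, qb+bq=b), define Ω_q(a,b) = ρ(q[a,b]) and L_q(b) = 2ρ(q*q)[b*,q] + ρ(qb*)[q,q*]. Then Ω_q(L_q(a), b) = (Ω_q(L_q(b), a))*, equivalently ρ([L_q(a),b]) = −2ρ(q*q)ρ(a*b) + ρ(qa*)ρ(q*b) and this expression equals the *-conjugate of the corresponding expression with a and b swapped, up to the antisymmetry sign. -/
import Mathlib


/-- The normalized operator `L_q(b) = 2 ρ(q*q)[b*,q] + ρ(q b*)[q,q*]`. -/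
def LqTr {A : Type*} [Ring A] [StarRing A] (ρ : A →+ A) (q b : A) : A :=
  2 * ρ (star q * q) * (star b * q - q * star b) +
    ρ (q * star b) * (q * star q - star q * q)

/-- Auxiliary explicit computation: only the tangency of `b` is needed. -/
theorem stmt10_aux {A : Type*} [Ring A] [StarRing A] (ρ : A →+ A) (q a b : A)
    (hρcen : ∀ x, ρ x ∈ Subring.center A)
    (hρlin : ∀ r ∈ Subring.center A, ∀ x, ρ (r * x) = r * ρ x)
    (hcyc : ∀ x y, ρ (x * y) = ρ (y * x))
    (hq : q * q = q)
    (hsurj : ∀ x : A, ∃ r ∈ Subring.center A, q * x * q = r * q)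
    (hρq : ρ q = 1)
    (hb : q * b + b * q = b) :
    ρ (q * (LqTr ρ q a * b - b * LqTr ρ q a)) =
      -(2 * ρ (star q * q) * ρ (star a * b)) + ρ (q * star a) * ρ (star q * b) := by
  have hcom : ∀ x y : A, y * ρ x = ρ x * y := fun x y => Subring.mem_center_iff.mp (hρcen x) y
  have hlin : ∀ x y : A, ρ (ρ x * y) = ρ x * ρ y := fun x y => hρlin _ (hρcen x) y
  have hpull : ∀ x u v : A, u * (ρ x * v) = ρ x * (u * v) := by
    intro x u v; rw [← mul_assoc, hcom, mul_assoc]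
  have hq' : ∀ x : A, q * (q * x) = q * x := fun x => by rw [← mul_assoc, hq]
  have key : ∀ x, q * x * q = ρ (q * x) * q := by
    intro x
    obtain ⟨r, hr, hrq⟩ := hsurj x
    have h1 : ρ (q * x * q) = r := by rw [hrq, hρlin r hr, hρq, mul_one]
    have h2 : ρ (q * x * q) = ρ (q * x) := by rw [hcyc (q * x) q, ← mul_assoc, hq]
    have h3 : ρ (q * x) = r := h2.symm.trans h1
    rw [hrq, h3]
  have hqbq : q * b * q = 0 := by
    have h : q * b * q + q * b * q = q * b * q := by
      conv_rhs => rw [← hb]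
      simp [mul_add, add_mul, mul_assoc, hq, hq']
    exact add_eq_left.mp h
  have hqbq' : ∀ x : A, q * (b * (q * x)) = 0 := fun x => by
    rw [← mul_assoc, ← mul_assoc, hqbq, zero_mul]
  have hqbq2 : q * (b * q) = 0 := by rw [← mul_assoc, hqbq]
  have hρqb : ρ (q * b) = 0 := by
    have h1 : ρ (q * b) = ρ (q * b * q) := by rw [hcyc (q * b) q, ← mul_assoc, hq]
    rw [h1, hqbq, map_zero]
  have e1 : ρ (q * (star a * (q * b))) = 0 := by
    rw [← mul_assoc, ← mul_assoc, key (star a), mul_assoc, hlin, hρqb, mul_zero]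
  have e2 : ρ (q * (star q * (q * b))) = 0 := by
    rw [← mul_assoc, ← mul_assoc, key (star q), mul_assoc, hlin, hρqb, mul_zero]
  have e3 : ρ (q * (b * (star a * q))) = ρ (q * (b * star a)) := by
    have h : q * (b * (star a * q)) = q * (b * star a) * q := by simp [mul_assoc]
    rw [h, hcyc (q * (b * star a)) q, hq']
  have e4 : ρ (q * (b * (star q * q))) = ρ (q * (b * star q)) := by
    have h : q * (b * (star q * q)) = q * (b * star q) * q := by simp [mul_assoc]
    rw [h, hcyc (q * (b * star q)) q, hq']
  have e5 : ρ (star a * b) = ρ (q * (star a * b)) + ρ (q * (b * star a)) := by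
    have t1 : ρ (star a * (q * b)) = ρ (q * (b * star a)) := by
      rw [hcyc (star a) (q * b), mul_assoc]
    have t2 : ρ (star a * (b * q)) = ρ (q * (star a * b)) := by
      rw [← mul_assoc, hcyc (star a * b) q]
    calc ρ (star a * b) = ρ (star a * (q * b + b * q)) := by rw [hb]
      _ = ρ (star a * (q * b)) + ρ (star a * (b * q)) := by rw [mul_add, map_add]
      _ = _ := by rw [t1, t2, add_comm]
  have e6 : ρ (star q * b) = ρ (q * (star q * b)) + ρ (q * (b * star q)) := by
    have t1 : ρ (star q * (q * b)) = ρ (q * (b * star q)) := by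
      rw [hcyc (star q) (q * b), mul_assoc]
    have t2 : ρ (star q * (b * q)) = ρ (q * (star q * b)) := by
      rw [← mul_assoc, hcyc (star q * b) q]
    calc ρ (star q * b) = ρ (star q * (q * b + b * q)) := by rw [hb]
      _ = ρ (star q * (q * b)) + ρ (star q * (b * q)) := by rw [mul_add, map_add]
      _ = _ := by rw [t1, t2, add_comm]
  rw [e5, e6]
  simp only [LqTr, two_mul, mul_sub, sub_mul, mul_add, add_mul, mul_assoc, hq, hq', hpull,
    hlin, hqbq', hqbq2, map_add, map_sub, map_zero, e1, e2, e3, e4, hρqb, mul_zero, zero_mul]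
  abel

/-- with `Ω_q(a,b) = ρ(q[a,b])`, one has
`Ω_q(L_q(a), b) = (Ω_q(L_q(b), a))*`, and explicitly
`ρ(q[L_q(a),b]) = −2ρ(q*q)ρ(a*b) + ρ(qa*)ρ(q*b)`. -/
theorem stmt_10 {A : Type*} [Ring A] [StarRing A] (ρ : A →+ A) (q a b : A)
    (hρcen : ∀ x, ρ x ∈ Subring.center A)
    (hρlin : ∀ r ∈ Subring.center A, ∀ x, ρ (r * x) = r * ρ x)
    (hcyc : ∀ x y, ρ (x * y) = ρ (y * x))
    (hstar : ∀ x, ρ (star x) = star (ρ x))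
    (hq : q * q = q)
    (hinj : ∀ r s : A, r ∈ Subring.center A → s ∈ Subring.center A →
      r * q = s * q → r = s)
    (hsurj : ∀ x : A, ∃ r ∈ Subring.center A, q * x * q = r * q)
    (hρq : ρ q = 1)
    (ha : q * a + a * q = a) (hb : q * b + b * q = b) :
    ρ (q * (LqTr ρ q a * b - b * LqTr ρ q a)) =
        star (ρ (q * (LqTr ρ q b * a - a * LqTr ρ q b))) ∧
      ρ (q * (LqTr ρ q a * b - b * LqTr ρ q a)) =
        -(2 * ρ (star q * q) * ρ (star a * b)) +
          ρ (q * star a) * ρ (star q * b) := by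
  have hcom : ∀ x y : A, y * ρ x = ρ x * y := fun x y => Subring.mem_center_iff.mp (hρcen x) y
  have h2 := stmt10_aux ρ q a b hρcen hρlin hcyc hq hsurj hρq hb
  have h2' := stmt10_aux ρ q b a hρcen hρlin hcyc hq hsurj hρq ha
  refine ⟨?_, h2⟩
  rw [h2, h2']
  have hstar' : ∀ x : A, star (ρ x) = ρ (star x) := fun x => (hstar x).symm
  simp only [star_add, star_neg, star_mul, hstar', star_star, star_ofNat]
  rw [hcyc (star a) q, hcyc b (star q)]
  have hx : ρ (star a * b) * (ρ (star q * q) * 2) = 2 * ρ (star q * q) * ρ (star a * b) := by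
    rw [← mul_assoc, hcom, mul_two, two_mul, add_mul]
  rw [hx]
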